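/- Let l : ℕ → ℕ be strictly increasing, Q ⊆ 2^ω a closed set, and F a finite tree of height h. Then the family 𝒯(Q, F) of l-branching skeletal trees T extending F with [T] ⊆ Q is a closed subset of the space of all sets of strings with the product topology (and hence compact). -/

import Mathlib

open scoped ENNReal

/-- The length-`n` prefix of a point of Cantor space `2^ω = ℕ → Bool`, as a binary string. -/
def pre (x : ℕ → Bool) (n : ℕ) : List Bool := (List.range n).map x

/-- `σ` is a (finite) prefix of `x ∈ 2^ω`. -/
def PrefOf (σ : List Bool) (x : ℕ → Bool) : Prop := pre x σ.length = σ

/-- The cylinder `[σ] = {x ∈ 2^ω : σ ⪯ x}`. -/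
def cyl (σ : List Bool) : Set (ℕ → Bool) := {x | PrefOf σ x}

/-- `[V] = ⋃_{σ ∈ V} [σ]`. -/
def cylSet (V : Set (List Bool)) : Set (ℕ → Bool) := ⋃ σ ∈ V, cyl σ

/-- A tree: a set of binary strings closed under prefixes. -/
def IsTree (T : Set (List Bool)) : Prop := ∀ σ ∈ T, ∀ τ : List Bool, τ <+: σ → τ ∈ T

/-- A pruned tree: every node has a proper extension in the tree. -/
def Pruned (T : Set (List Bool)) : Prop := ∀ σ ∈ T, ∃ τ ∈ T, σ <+: τ ∧ σ ≠ τ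

/-- The set `[T]` of paths of a tree `T`. -/
def paths (T : Set (List Bool)) : Set (ℕ → Bool) := {x | ∀ n, pre x n ∈ T}

/-- The fair-coin (uniform) product measure on Cantor space, characterized by its
values `μ [σ] = 2^{-|σ|}` on cylinders (this determines `μ` uniquely). -/
def IsFairCoin (μ : MeasureTheory.Measure (ℕ → Bool)) : Prop :=
  ∀ σ : List Bool, μ (cyl σ) = 2⁻¹ ^ σ.length

/-- Two strings are incomparable: neither is a prefix of the other. -/
def Incomparable (τ₁ τ₂ : List Bool) : Prop := ¬τ₁ <+: τ₂ ∧ ¬τ₂ <+: τ₁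

/-- `σ` branches in `T`: it has at least two incomparable extensions in `T`. -/
def Branches (T : Set (List Bool)) (σ : List Bool) : Prop :=
  ∃ τ₁ ∈ T, ∃ τ₂ ∈ T, σ <+: τ₁ ∧ σ <+: τ₂ ∧ Incomparable τ₁ τ₂

/-- `T` is skeletal with main branch `z`: `z ∈ [T]` and a node of `T` branches in `T`
iff it is a prefix of `z`. -/
def SkeletalWithBranch (T : Set (List Bool)) (z : ℕ → Bool) : Prop :=
  z ∈ paths T ∧ ∀ σ ∈ T, (Branches T σ ↔ PrefOf σ z)

/-- A skeletal tree `T` with main branch `z` is `l`-branching: for every `i`, the prefix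
of `z` of length `l i` has at least two incomparable extensions in `T` of length at
most `l (i+1)`. -/
def LBranchingSkel (l : ℕ → ℕ) (T : Set (List Bool)) (z : ℕ → Bool) : Prop :=
  ∀ i : ℕ, ∃ τ₁ ∈ T, ∃ τ₂ ∈ T, pre z (l i) <+: τ₁ ∧ pre z (l i) <+: τ₂ ∧
    τ₁.length ≤ l (i + 1) ∧ τ₂.length ≤ l (i + 1) ∧ Incomparable τ₁ τ₂

/-- `F` is a finite tree of height `h`: nonempty, prefix-closed, every element has
length at most `h`, and every maximal element has length exactly `h`. -/
def FinTree (F : Finset (List Bool)) (h : ℕ) : Prop :=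
  F.Nonempty ∧ (∀ σ ∈ F, ∀ τ : List Bool, τ <+: σ → τ ∈ F) ∧
    ∀ σ ∈ F, σ.length ≤ h ∧ ((∀ τ ∈ F, σ <+: τ → σ = τ) → σ.length = h)

/-- A tree `T` extends a finite tree `F` of height `h`: `F = T ∩ 2^{≤ h}`. -/
def ExtendsFin (T : Set (List Bool)) (F : Finset (List Bool)) (h : ℕ) : Prop :=
  ∀ σ : List Bool, σ.length ≤ h → (σ ∈ T ↔ σ ∈ F)

/-- The class `𝒯(Q, F)` of `l`-branching skeletal trees extending `F` (of height `h`)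
all of whose paths lie in `Q`. -/
def TQF (l : ℕ → ℕ) (Q : Set (ℕ → Bool)) (F : Finset (List Bool)) (h : ℕ)
    (T : Set (List Bool)) : Prop :=
  IsTree T ∧ Pruned T ∧ (∃ z : ℕ → Bool, SkeletalWithBranch T z ∧ LBranchingSkel l T z) ∧
    ExtendsFin T F h ∧ paths T ⊆ Q

/-- The set of strings coded by a characteristic function. -/
def toSet (T : List Bool → Bool) : Set (List Bool) := {σ | T σ = true}

/-!
Each defining condition of `𝒯(Q, F)` is replaced by an equivalent one that is closed in the
product topology. Being a tree, extending `F`, and prunedness (in its one-step form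
`σ ∈ T → ∃ b, σ ++ [b] ∈ T`) each constrain finitely many coordinates at a time. For a pruned
tree every node lies on a path (by compactness of `2^ω`), so since `Q` is closed,
`[T] ⊆ Q` becomes `[σ] ∩ Q ≠ ∅` for every `σ ∈ T`. Under `l`-branching the prefixes of the
main branch `z` branch automatically (because `i ≤ l i`), so the skeletal condition becomes a
closed condition on pairs `(T, z)`, and projecting along the compact factor `2^ω` keeps it
closed.
-/

open Filter Topology Set

section FiniteDependence

variable {ι β : Type*} {α : ι → Type*}

theorem dependsOn_of_forall_imp {p : (Π i, α i) → Prop} {s : Set ι}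
    (h : ∀ ⦃x y : Π i, α i⦄, (∀ i ∈ s, x i = y i) → p x → p y) : DependsOn p s :=
  fun _ _ hxy => propext ⟨h hxy, h fun i hi => (hxy i hi).symm⟩

variable [∀ i, TopologicalSpace (α i)] [∀ i, DiscreteTopology (α i)]

theorem DependsOn.isLocallyConstant {f : (Π i, α i) → β} {s : Set ι} (hf : DependsOn f s)
    (hs : s.Finite) : IsLocallyConstant f := by
  refine (IsLocallyConstant.iff_eventually_eq f).2 fun x => ?_
  have hx : ∀ᶠ y in 𝓝 x, ∀ i ∈ s, y i = x i := hs.eventually_all.2 fun i _ =>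
    (continuous_apply i).continuousAt.eventually_mem (isOpen_discrete {x i} |>.mem_nhds rfl)
  exact hx.mono fun y hy => hf hy

theorem DependsOn.isClopen_setOf {p : (Π i, α i) → Prop} {s : Set ι} (hp : DependsOn p s)
    (hs : s.Finite) : IsClopen {x | p x} := by
  simpa using (hp.isLocallyConstant hs).isClopen_fiber True

theorem isClosed_setOf_forall_of_dependsOn {κ : Type*} {p : κ → (Π i, α i) → Prop}
    {s : κ → Set ι} (hp : ∀ k, DependsOn (p k) (s k)) (hs : ∀ k, (s k).Finite) :
    IsClosed {x | ∀ k, p k x} := by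
  rw [ofPred_forall]
  exact isClosed_iInter fun k => ((hp k).isClopen_setOf (hs k)).isClosed

end FiniteDependence

section Prefixes

variable {x y : ℕ → Bool} {σ τ : List Bool} {m n : ℕ}

@[simp] theorem length_pre (x : ℕ → Bool) (n : ℕ) : (pre x n).length = n := by simp [pre]

theorem pre_eq_pre_iff : pre x n = pre y n ↔ ∀ i < n, x i = y i := by
  simp [pre, List.map_inj_left]

theorem pre_prefix_pre (x : ℕ → Bool) (h : m ≤ n) : pre x m <+: pre x n := by
  have : pre x m = (pre x n).take m := by
    rw [pre, pre, ← List.map_take, List.take_range, min_eq_left h]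
  exact this ▸ List.take_prefix _ _

theorem dependsOn_pre (n : ℕ) : DependsOn (fun x : ℕ → Bool => pre x n) (Iio n) :=
  fun _ _ h => pre_eq_pre_iff.2 fun i hi => h i hi

theorem prefOf_pre (x : ℕ → Bool) (n : ℕ) : PrefOf (pre x n) x := by
  rw [PrefOf, length_pre]

theorem PrefOf.prefix_pre (h : PrefOf σ x) (hn : σ.length ≤ n) : σ <+: pre x n :=
  h ▸ pre_prefix_pre x hn

theorem PrefOf.of_prefix (hτ : PrefOf τ x) (h : σ <+: τ) : PrefOf σ x := by
  have hσ : σ <+: pre x τ.length := by rw [hτ]; exact h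
  exact (List.prefix_of_prefix_length_le (pre_prefix_pre x h.length_le) hσ (by simp)).eq_of_length
    (by simp)

theorem exists_prefOf (σ : List Bool) : ∃ x, PrefOf σ x :=
  ⟨fun i => σ.getD i false, List.ext_getElem (by simp) fun i hi _ => by simp_all [pre]⟩

theorem isClopen_cyl (σ : List Bool) : IsClopen (cyl σ) :=
  DependsOn.isClopen_setOf (fun _ _ h => congrArg (· = σ) (dependsOn_pre _ h)) (finite_Iio _)

theorem tendsto_of_prefOf_pre {y : ℕ → ℕ → Bool} (h : ∀ n, PrefOf (pre x n) (y n)) :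
    Tendsto y atTop (𝓝 x) := by
  refine tendsto_pi_nhds.2 fun i => tendsto_const_nhds.congr' ?_
  filter_upwards [eventually_gt_atTop i] with n hn
  have := h n
  rw [PrefOf, length_pre, pre_eq_pre_iff] at this
  exact (this i hn).symm

end Prefixes

section Trees

variable {T : Set (List Bool)} {σ τ : List Bool} {x : ℕ → Bool}

theorem Pruned.exists_extension (hT : Pruned T) (hσ : σ ∈ T) (n : ℕ) :
    ∃ τ ∈ T, σ <+: τ ∧ n ≤ τ.length := by
  induction n with
  | zero => exact ⟨σ, hσ, List.prefix_refl σ, Nat.zero_le _⟩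
  | succ n ih =>
    obtain ⟨τ, hτ, hστ, hn⟩ := ih
    obtain ⟨ρ, hρ, hτρ, hne⟩ := hT τ hτ
    have : τ.length < ρ.length := hτρ.length_le.lt_of_ne fun h => hne (hτρ.eq_of_length h)
    exact ⟨ρ, hρ, hστ.trans hτρ, by omega⟩

theorem IsTree.pre_mem (hT : IsTree T) (hτ : τ ∈ T) (hx : PrefOf τ x) {n : ℕ}
    (hn : n ≤ τ.length) : pre x n ∈ T :=
  hT τ hτ _ (hx ▸ pre_prefix_pre x hn)

theorem IsTree.exists_path (hT : IsTree T) (hp : Pruned T) (hσ : σ ∈ T) :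
    ∃ x ∈ paths T, PrefOf σ x := by
  let C : ℕ → Set (ℕ → Bool) := fun n => cyl σ ∩ {x | pre x n ∈ T}
  have hC_closed : ∀ n, IsClosed (C n) := fun n =>
    (isClopen_cyl σ).isClosed.inter (DependsOn.isClopen_setOf
      (fun _ _ h => congrArg (· ∈ T) (dependsOn_pre n h)) (finite_Iio n)).isClosed
  have hC_anti : ∀ n, C (n + 1) ⊆ C n := fun n x hx =>
    ⟨hx.1, hT _ hx.2 _ (pre_prefix_pre x n.le_succ)⟩
  have hC_ne : ∀ n, (C n).Nonempty := fun n => by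
    obtain ⟨τ, hτ, hστ, hn⟩ := hp.exists_extension hσ n
    obtain ⟨x, hx⟩ := exists_prefOf τ
    exact ⟨x, hx.of_prefix hστ, hT.pre_mem hτ hx hn⟩
  obtain ⟨x, hx⟩ := IsCompact.nonempty_iInter_of_sequence_nonempty_isCompact_isClosed C hC_anti
    hC_ne (hC_closed 0).isCompact hC_closed
  rw [mem_iInter] at hx
  exact ⟨x, fun n => (hx n).2, (hx 0).1⟩

theorem IsTree.pruned_iff (hT : IsTree T) : Pruned T ↔ ∀ σ ∈ T, ∃ b, σ ++ [b] ∈ T := by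
  refine ⟨fun hp σ hσ => ?_, fun h σ hσ => ?_⟩
  · obtain ⟨_, hτ, ⟨_ | ⟨b, ρ⟩, rfl⟩, hne⟩ := hp σ hσ
    · simp at hne
    · exact ⟨b, hT _ hτ _ ⟨ρ, by simp⟩⟩
  · obtain ⟨b, hb⟩ := h σ hσ
    exact ⟨σ ++ [b], hb, List.prefix_append σ [b], by simp⟩

theorem paths_subset_of_forall_nonempty {Q : Set (ℕ → Bool)} (hQ : IsClosed Q)
    (h : ∀ σ ∈ T, (cyl σ ∩ Q).Nonempty) : paths T ⊆ Q := fun x hx => by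
  choose y hy using fun n => h _ (hx n)
  exact hQ.mem_of_tendsto (tendsto_of_prefOf_pre fun n => (hy n).1) (.of_forall fun n => (hy n).2)

theorem IsTree.paths_subset_iff (hT : IsTree T) (hp : Pruned T) {Q : Set (ℕ → Bool)}
    (hQ : IsClosed Q) : paths T ⊆ Q ↔ ∀ σ ∈ T, (cyl σ ∩ Q).Nonempty := by
  refine ⟨fun hTQ σ hσ => ?_, paths_subset_of_forall_nonempty hQ⟩
  obtain ⟨x, hx, hσx⟩ := hT.exists_path hp hσ
  exact ⟨x, hσx, hTQ hx⟩

end Trees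

section Skeletal

def BranchesWithin (T : Set (List Bool)) (σ : List Bool) (m : ℕ) : Prop :=
  ∃ τ₁ ∈ T, ∃ τ₂ ∈ T, σ <+: τ₁ ∧ σ <+: τ₂ ∧ τ₁.length ≤ m ∧ τ₂.length ≤ m ∧ Incomparable τ₁ τ₂

variable {l : ℕ → ℕ} {T : Set (List Bool)} {z : ℕ → Bool} {σ : List Bool}

theorem lBranchingSkel_iff :
    LBranchingSkel l T z ↔ ∀ i, BranchesWithin T (pre z (l i)) (l (i + 1)) :=
  Iff.rfl

theorem LBranchingSkel.branches (hl : StrictMono l) (h : LBranchingSkel l T z)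
    (hσ : PrefOf σ z) : Branches T σ := by
  obtain ⟨τ₁, h₁, τ₂, h₂, hp₁, hp₂, -, -, hinc⟩ := h σ.length
  have hσz := hσ.prefix_pre hl.le_apply
  exact ⟨τ₁, h₁, τ₂, h₂, hσz.trans hp₁, hσz.trans hp₂, hinc⟩

theorem skeletalWithBranch_and_lBranchingSkel_iff (hl : StrictMono l) :
    SkeletalWithBranch T z ∧ LBranchingSkel l T z ↔
      z ∈ paths T ∧ (∀ σ ∈ T, Branches T σ → PrefOf σ z) ∧ LBranchingSkel l T z :=
  ⟨fun ⟨⟨hz, hbr⟩, hlb⟩ => ⟨hz, fun σ hσ => (hbr σ hσ).1, hlb⟩,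
    fun ⟨hz, hbr, hlb⟩ => ⟨⟨hz, fun σ hσ => ⟨hbr σ hσ, hlb.branches hl⟩⟩, hlb⟩⟩

theorem tqf_iff (hl : StrictMono l) {Q : Set (ℕ → Bool)} (hQ : IsClosed Q)
    {F : Finset (List Bool)} {h : ℕ} :
    TQF l Q F h T ↔ IsTree T ∧ (∀ σ ∈ T, ∃ b, σ ++ [b] ∈ T) ∧ ExtendsFin T F h ∧
      (∀ σ ∈ T, (cyl σ ∩ Q).Nonempty) ∧
      ∃ z ∈ paths T, (∀ σ ∈ T, Branches T σ → PrefOf σ z) ∧ LBranchingSkel l T z := by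
  simp only [TQF, skeletalWithBranch_and_lBranchingSkel_iff hl]
  refine ⟨fun ⟨hT, hp, hz, hF, hQT⟩ => ?_, fun ⟨hT, hp, hF, hQT, hz⟩ => ?_⟩
  · exact ⟨hT, hT.pruned_iff.1 hp, hF, (hT.paths_subset_iff hp hQ).1 hQT, hz⟩
  · exact ⟨hT, hT.pruned_iff.2 hp, hz, hF, paths_subset_of_forall_nonempty hQ hQT⟩

end Skeletal

section Topology

theorem isClopen_setOf_mem_toSet (σ : List Bool) :
    IsClopen {T : List Bool → Bool | σ ∈ toSet T} :=
  (isClopen_discrete {true}).preimage (continuous_apply σ)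

theorem isClosed_setOf_isTree : IsClosed {T : List Bool → Bool | IsTree (toSet T)} := by
  refine isClosed_setOf_forall_of_dependsOn (s := fun σ => {τ | τ ∈ σ.inits})
    (fun σ => dependsOn_of_forall_imp fun T T' h hT hσ τ hτ => ?_) fun σ => σ.inits.finite_toSet
  have hT' : ∀ ρ, ρ <+: σ → T ρ = T' ρ := fun ρ hρ => h ρ ((List.mem_inits ρ σ).2 hρ)
  show T' τ = true
  rw [← hT' τ hτ]
  exact hT ((hT' σ (List.prefix_refl σ)).trans hσ) τ hτ

theorem isClosed_setOf_forall_exists_append :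
    IsClosed {T : List Bool → Bool | ∀ σ ∈ toSet T, ∃ b, σ ++ [b] ∈ toSet T} := by
  refine isClosed_setOf_forall_of_dependsOn (s := fun σ => insert σ (range (σ ++ [·])))
    (fun σ T T' h => ?_) fun σ => (finite_range _).insert σ
  simp only [toSet, mem_ofPred_eq, h σ (mem_insert _ _),
    fun b => h (σ ++ [b]) (mem_insert_of_mem _ ⟨b, rfl⟩)]

theorem isClosed_setOf_extendsFin (F : Finset (List Bool)) (h : ℕ) :
    IsClosed {T : List Bool → Bool | ExtendsFin (toSet T) F h} :=
  isClosed_setOf_forall_of_dependsOn (s := fun σ => {σ})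
    (fun σ _ _ hTT' => by simp only [toSet, mem_ofPred_eq, hTT' σ rfl]) fun σ => finite_singleton σ

theorem isClosed_setOf_forall_mem (P : List Bool → Prop) :
    IsClosed {T : List Bool → Bool | ∀ σ ∈ toSet T, P σ} :=
  isClosed_setOf_forall_of_dependsOn (s := fun σ => {σ})
    (fun σ _ _ hTT' => by simp only [toSet, mem_ofPred_eq, hTT' σ rfl]) fun σ => finite_singleton σ

theorem isOpen_setOf_branches (σ : List Bool) :
    IsOpen {T : List Bool → Bool | Branches (toSet T) σ} :=
  isOpen_iff_forall_mem_open.2 fun _ ⟨τ₁, h₁, τ₂, h₂, hστ⟩ =>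
    ⟨_, fun _ hT' => ⟨τ₁, hT'.1, τ₂, hT'.2, hστ⟩,
      (isClopen_setOf_mem_toSet τ₁).isOpen.inter (isClopen_setOf_mem_toSet τ₂).isOpen, h₁, h₂⟩

theorem isClosed_setOf_branchesWithin (σ : List Bool) (m : ℕ) :
    IsClosed {T : List Bool → Bool | BranchesWithin (toSet T) σ m} := by
  refine (DependsOn.isClopen_setOf (s := {τ | τ.length ≤ m}) (dependsOn_of_forall_imp ?_)
    (List.finite_length_le Bool m)).isClosed
  rintro T T' h ⟨τ₁, h₁, τ₂, h₂, hp₁, hp₂, hl₁, hl₂, hinc⟩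
  exact ⟨τ₁, (h τ₁ hl₁).symm.trans h₁, τ₂, (h τ₂ hl₂).symm.trans h₂, hp₁, hp₂, hl₁, hl₂, hinc⟩

theorem isClosed_setOf_pre_prod {X : Type*} [TopologicalSpace X] (n : ℕ)
    {P : X → List Bool → Prop} (hP : ∀ σ, IsClosed {x | P x σ}) :
    IsClosed {p : X × (ℕ → Bool) | P p.1 (pre p.2 n)} := by
  have : {p : X × (ℕ → Bool) | P p.1 (pre p.2 n)} =
      ⋃ σ ∈ {σ : List Bool | σ.length = n}, {x | P x σ} ×ˢ cyl σ := by
    ext ⟨x, z⟩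
    simp only [mem_ofPred_eq, mem_iUnion, mem_prod, cyl, exists_prop]
    refine ⟨fun hx => ⟨pre z n, length_pre z n, hx, prefOf_pre z n⟩, ?_⟩
    rintro ⟨σ, rfl, hx, hz⟩
    rwa [hz]
  rw [this]
  exact (List.finite_length_eq Bool n).isClosed_biUnion fun σ _ =>
    (hP σ).prod (isClopen_cyl σ).isClosed

theorem isClosed_setOf_exists_mainBranch (l : ℕ → ℕ) :
    IsClosed {T : List Bool → Bool | ∃ z ∈ paths (toSet T),
      (∀ σ ∈ toSet T, Branches (toSet T) σ → PrefOf σ z) ∧ LBranchingSkel l (toSet T) z} := by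
  simp only [lBranchingSkel_iff]
  let K : Set ((List Bool → Bool) × (ℕ → Bool)) := {p | (∀ n, pre p.2 n ∈ toSet p.1) ∧
    (∀ σ, σ ∈ toSet p.1 → Branches (toSet p.1) σ → PrefOf σ p.2) ∧
      ∀ i, BranchesWithin (toSet p.1) (pre p.2 (l i)) (l (i + 1))}
  have hK : IsClosed K := by
    simp only [K, ofPred_and, ofPred_forall]
    refine (isClosed_iInter fun n => isClosed_setOf_pre_prod n fun σ =>
      (isClopen_setOf_mem_toSet σ).isClosed).inter
      ((isClosed_iInter fun σ => isClosed_imp ?_ (isClosed_imp ?_ ?_)).inter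
        (isClosed_iInter fun i => isClosed_setOf_pre_prod (l i) fun σ =>
          isClosed_setOf_branchesWithin σ (l (i + 1))))
    · exact (isClopen_setOf_mem_toSet σ).isOpen.preimage continuous_fst
    · exact (isOpen_setOf_branches σ).preimage continuous_fst
    · exact (isClopen_cyl σ).isClosed.preimage continuous_snd
  convert isClosedMap_fst_of_compactSpace K hK using 1
  ext T
  exact ⟨fun ⟨z, hz⟩ => ⟨(T, z), hz, rfl⟩, fun ⟨(T, z), hz, h⟩ => h ▸ ⟨z, hz⟩⟩

end Topology

theorem stmt_6_general (l : ℕ → ℕ) (hl : StrictMono l) (Q : Set (ℕ → Bool)) (hQ : IsClosed Q)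
    (F : Finset (List Bool)) (h : ℕ) :
    IsClosed {T : List Bool → Bool | TQF l Q F h (toSet T)} ∧
      IsCompact {T : List Bool → Bool | TQF l Q F h (toSet T)} := by
  have hclosed : IsClosed {T : List Bool → Bool | TQF l Q F h (toSet T)} := by
    simp only [tqf_iff hl hQ, ofPred_and]
    exact isClosed_setOf_isTree.inter <| isClosed_setOf_forall_exists_append.inter <|
      (isClosed_setOf_extendsFin F h).inter <| (isClosed_setOf_forall_mem _).inter <|
        isClosed_setOf_exists_mainBranch l
  exact ⟨hclosed, hclosed.isCompact⟩

/-- For strictly increasing `l`, closed `Q ⊆ 2^ω` and a finite tree `F`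
of height `h`, the family `𝒯(Q, F)` is a closed (hence compact) subset of the space
of all sets of strings with the product topology. -/
theorem stmt_6 (l : ℕ → ℕ) (hl : StrictMono l) (Q : Set (ℕ → Bool)) (hQ : IsClosed Q)
    (F : Finset (List Bool)) (h : ℕ) (hF : FinTree F h) :
    IsClosed {T : List Bool → Bool | TQF l Q F h (toSet T)} ∧
      IsCompact {T : List Bool → Bool | TQF l Q F h (toSet T)} :=
  stmt_6_general l hl Q hQ F h
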